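/- Let d be an even positive integer, let m, n be integers, and let θ : {0, ..., d/2 − 1} → ℝ be a family of rotational frequencies. Represent a query vector q ∈ ℝ^d and a key vector k ∈ ℝ^d by their complex 2D subvectors q_0, ..., q_{d/2−1} ∈ ℂ and k_0, ..., k_{d/2−1} ∈ ℂ (where q_i = q_{[2i:2i+1]} is the complex number formed from the 2i-th and (2i+1)-th real coordinates, and similarly for k). The Rotary Position Embedding at position m acts on the i-th subvector by multiplication by e^{i m θ_i}. Then the real inner product of the rotated vectors satisfies (R_m q)^⊤ (R_n k) = Re[ Σ_{i=0}^{d/2−1} (e^{i m θ_i} q_i) · conj(e^{i n θ_i} k_i) ] = Re[ Σ_{i=0}^{d/2−1} q_i · conj(k_i) · e^{i(m−n)θ_i} ]; in particular, the inner product depends on the positions m and n only through their difference m − n. -/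

import Mathlib

/-
RoPE multiplies the `i`-th complex subvector by `exp (m θᵢ I)`, and the real inner product of two
real vectors is the real part of `∑ᵢ uᵢ * conj wᵢ` over their subvectors. Since
`conj (exp (x I)) = exp (-x I)` for real `x`, the two phases combine into `exp ((m - n) θᵢ I)`.
-/

/-- Rotary Position Embedding (RoPE) at position `m` with frequencies `θ`:
each consecutive coordinate pair `(2i, 2i+1)` of the real vector `v` is
rotated by the angle `m · θ i`. -/
noncomputable def ropeRotate (θ : ℕ → ℝ) (m : ℤ) (v : ℕ → ℝ) : ℕ → ℝ := fun j =>
  if j % 2 = 0 then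
    Real.cos ((m : ℝ) * θ (j / 2)) * v j - Real.sin ((m : ℝ) * θ (j / 2)) * v (j + 1)
  else
    Real.sin ((m : ℝ) * θ (j / 2)) * v (j - 1) + Real.cos ((m : ℝ) * θ (j / 2)) * v j

/-- The `i`-th complex 2D subvector `v_{[2i:2i+1]}` of a real vector `v`:
the complex number whose real part is coordinate `2i` and whose imaginary
part is coordinate `2i+1`. -/
def subvec (v : ℕ → ℝ) (i : ℕ) : ℂ := ⟨v (2 * i), v (2 * i + 1)⟩

open Complex ComplexConjugate

theorem Finset.sum_range_two_mul {M : Type*} [AddCommMonoid M] (c : ℕ) (f : ℕ → M) :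
    ∑ j ∈ range (2 * c), f j = ∑ i ∈ range c, (f (2 * i) + f (2 * i + 1)) := by
  induction c with
  | zero => simp
  | succ c ih => rw [Nat.mul_succ, sum_range_succ, sum_range_succ, sum_range_succ, ih, add_assoc]

theorem sum_range_two_mul_mul_eq_re_sum_subvec (c : ℕ) (u w : ℕ → ℝ) :
    ∑ j ∈ Finset.range (2 * c), u j * w j
      = (∑ i ∈ Finset.range c, subvec u i * conj (subvec w i)).re := by
  rw [Finset.sum_range_two_mul, re_sum]
  simp [subvec, mul_re]

theorem subvec_ropeRotate (θ : ℕ → ℝ) (m : ℤ) (v : ℕ → ℝ) (i : ℕ) :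
    subvec (ropeRotate θ m v) i = exp (m * θ i * I) * subvec v i := by
  have hcast : (m : ℂ) * θ i = ((m * θ i : ℝ) : ℂ) := by push_cast; rfl
  have h2i : (2 * i) % 2 = 0 ∧ (2 * i) / 2 = i := by omega
  have h2i1 : (2 * i + 1) % 2 = 1 ∧ (2 * i + 1) / 2 = i ∧ 2 * i + 1 - 1 = 2 * i := by omega
  rw [hcast, Complex.ext_iff]
  simp only [subvec, ropeRotate, h2i, h2i1, mul_re, mul_im, exp_ofReal_mul_I_re,
    exp_ofReal_mul_I_im, if_true, if_false, one_ne_zero, true_and]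
  ring

theorem exp_mul_I_mul_conj_exp_mul_I (a b : ℝ) (z w : ℂ) :
    exp (a * I) * z * conj (exp (b * I) * w) = z * conj w * exp ((a - b : ℝ) * I) := by
  rw [map_mul, ← exp_conj, map_mul, conj_I, conj_ofReal, mul_mul_mul_comm, ← exp_add]
  push_cast
  ring_nf

theorem sum_ropeRotate_mul_eq_re_sum_exp_mul_conj (c : ℕ) (θ : ℕ → ℝ) (m n : ℤ)
    (q k : ℕ → ℝ) :
    ∑ j ∈ Finset.range (2 * c), ropeRotate θ m q j * ropeRotate θ n k j
      = (∑ i ∈ Finset.range c,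
          exp (m * θ i * I) * subvec q i * conj (exp (n * θ i * I) * subvec k i)).re := by
  simp only [sum_range_two_mul_mul_eq_re_sum_subvec, subvec_ropeRotate]

theorem sum_ropeRotate_mul_eq_re_sum_mul_conj_exp_sub (c : ℕ) (θ : ℕ → ℝ) (m n : ℤ)
    (q k : ℕ → ℝ) :
    ∑ j ∈ Finset.range (2 * c), ropeRotate θ m q j * ropeRotate θ n k j
      = (∑ i ∈ Finset.range c,
          subvec q i * conj (subvec k i) * exp (((m - n : ℤ) : ℂ) * θ i * I)).re := by
  rw [sum_ropeRotate_mul_eq_re_sum_exp_mul_conj]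
  congr 1
  refine Finset.sum_congr rfl fun i _ => ?_
  have hphase := exp_mul_I_mul_conj_exp_mul_I (m * θ i) (n * θ i) (subvec q i) (subvec k i)
  push_cast at hphase ⊢
  rwa [sub_mul]

theorem rope_inner_product_relative_general
    (d : ℕ) (hd : Even d)
    (m n : ℤ) (θ : ℕ → ℝ) (q k : ℕ → ℝ) :
    ((∑ j ∈ Finset.range d, ropeRotate θ m q j * ropeRotate θ n k j)
      = (∑ i ∈ Finset.range (d / 2),
          (Complex.exp ((m : ℂ) * (θ i : ℂ) * Complex.I) * subvec q i) *
            (starRingEnd ℂ)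
              (Complex.exp ((n : ℂ) * (θ i : ℂ) * Complex.I) * subvec k i)).re)
    ∧ ((∑ j ∈ Finset.range d, ropeRotate θ m q j * ropeRotate θ n k j)
      = (∑ i ∈ Finset.range (d / 2),
          subvec q i * (starRingEnd ℂ) (subvec k i) *
            Complex.exp (((m - n : ℤ) : ℂ) * (θ i : ℂ) * Complex.I)).re)
    ∧ (∀ m' n' : ℤ, m - n = m' - n' →
        (∑ j ∈ Finset.range d, ropeRotate θ m q j * ropeRotate θ n k j)
          = ∑ j ∈ Finset.range d, ropeRotate θ m' q j * ropeRotate θ n' k j) := by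
  obtain ⟨c, rfl⟩ := hd
  rw [← two_mul, Nat.mul_div_cancel_left c two_pos]
  refine ⟨sum_ropeRotate_mul_eq_re_sum_exp_mul_conj c θ m n q k,
    sum_ropeRotate_mul_eq_re_sum_mul_conj_exp_sub c θ m n q k, fun m' n' hmn => ?_⟩
  rw [sum_ropeRotate_mul_eq_re_sum_mul_conj_exp_sub, sum_ropeRotate_mul_eq_re_sum_mul_conj_exp_sub,
    hmn]

/-- **RoPE-induced inner product is a relative position encoding.**
For `d` even and positive, query and key vectors `q k ∈ ℝ^d`, and rotational
frequencies `θ`, the real inner product of the rotated vectors satisfies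
`(R_m q)ᵀ (R_n k) = Re[ ∑_{i<d/2} (e^{i m θ_i} q_i) · conj (e^{i n θ_i} k_i) ]
  = Re[ ∑_{i<d/2} q_i · conj (k_i) · e^{i (m−n) θ_i} ]`,
and in particular it depends on `m` and `n` only through `m − n`. -/
theorem rope_inner_product_relative
    (d : ℕ) (hd : Even d) (hdpos : 0 < d)
    (m n : ℤ) (θ : ℕ → ℝ) (q k : ℕ → ℝ) :
    ((∑ j ∈ Finset.range d, ropeRotate θ m q j * ropeRotate θ n k j)
      = (∑ i ∈ Finset.range (d / 2),
          (Complex.exp ((m : ℂ) * (θ i : ℂ) * Complex.I) * subvec q i) *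
            (starRingEnd ℂ)
              (Complex.exp ((n : ℂ) * (θ i : ℂ) * Complex.I) * subvec k i)).re)
    ∧ ((∑ j ∈ Finset.range d, ropeRotate θ m q j * ropeRotate θ n k j)
      = (∑ i ∈ Finset.range (d / 2),
          subvec q i * (starRingEnd ℂ) (subvec k i) *
            Complex.exp (((m - n : ℤ) : ℂ) * (θ i : ℂ) * Complex.I)).re)
    ∧ (∀ m' n' : ℤ, m - n = m' - n' →
        (∑ j ∈ Finset.range d, ropeRotate θ m q j * ropeRotate θ n k j)
          = ∑ j ∈ Finset.range d, ropeRotate θ m' q j * ropeRotate θ n' k j) :=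
  rope_inner_product_relative_general d hd m n θ q k
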